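/- arXiv:0810.1979 — 3 statements merged into one kernel-verified Lean document; each statement's English description precedes it below -/
import Mathlib

section
/- Let X₁ and X₂ be finite sets, X = X₁ ∪ X₂, Y = X₁ ∩ X₂. Let z ∈ Z(X) and z̄ ∈ Z(X₁) be such that π_{X→Y}(z) = π_{X₁→Y}(z̄). Then there exists z' ∈ Z(X) such that π_{X→X₁}(z') = z̄, π_{X→X₂}(z') = π_{X→X₂}(z), and ‖z - z'‖₁ = ‖π_{X→X₁}(z) - z̄‖₁. -/
open Finset

/-- `ZL S` is the integral lattice with basis indexed by binary labelings of the
finite set `S`. -/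
abbrev ZL {V : Type} (S : Finset V) : Type := ({x // x ∈ S} → Bool) → ℤ

/-- The projection `π_{S → T}` for `T ⊆ S`: the linear extension of `e_a ↦ e_{a|_T}`. -/
noncomputable def projZ {V : Type} [Fintype V] [DecidableEq V] {S T : Finset V}
    (h : T ⊆ S) (z : ZL S) : ZL T := fun b =>
  ∑ a : {x // x ∈ S} → Bool,
    if ∀ x : {x // x ∈ T}, a ⟨x.1, h x.2⟩ = b x then z a else 0

/-- The ℓ₁-norm on `ZL S` with respect to the standard basis. -/
noncomputable def l1Z {V : Type} [Fintype V] [DecidableEq V] {S : Finset V}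
    (z : ZL S) : ℤ := ∑ a, |z a|

/-!
Put `w := π_{X→X₁} z - z̄`; by the matching hypothesis `π_{X₁→Y} w = 0`. Push `w` forward along
the map extending labelings of `X₁` by `false` outside `X₁`, obtaining `u ∈ Z(X)`. This map is
injective, so `‖u‖₁ = ‖w‖₁`, and it is a section of restriction to `X₁`, so `π_{X→X₁} u = w`.
Restricting such an extension to `X₂` is the same as extending its restriction to `Y` from `Y`
to `X₂`, so `π_{X→X₂} u` is the push-forward of `π_{X₁→Y} w = 0`. Hence `z' := z - u` works.
-/

section pushZ

variable {α β γ : Type} [Fintype α] [DecidableEq β]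

def pushZ (f : α → β) (z : α → ℤ) : β → ℤ :=
  fun b => ∑ a ∈ univ.filter (f · = b), z a

lemma pushZ_apply_eq_sum_ite (f : α → β) (z : α → ℤ) (b : β) :
    pushZ f z b = ∑ a, if f a = b then z a else 0 :=
  sum_filter _ _

lemma pushZ_sub (f : α → β) (z z' : α → ℤ) : pushZ f (z - z') = pushZ f z - pushZ f z' := by
  funext b
  simp only [pushZ, Pi.sub_apply, sum_sub_distrib]

lemma pushZ_zero (f : α → β) : pushZ f (0 : α → ℤ) = 0 := by
  funext b
  simp [pushZ]

lemma pushZ_id [DecidableEq α] (z : α → ℤ) : pushZ id z = z := by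
  funext a
  simp [pushZ_apply_eq_sum_ite]

lemma pushZ_pushZ [Fintype β] [DecidableEq γ] (f : α → β) (g : β → γ) (z : α → ℤ) :
    pushZ g (pushZ f z) = pushZ (g ∘ f) z := by
  funext c
  simp only [pushZ_apply_eq_sum_ite, Function.comp_apply, ite_sum_zero]
  rw [sum_comm]
  refine sum_congr rfl fun a _ => ?_
  rw [Fintype.sum_eq_single (f a) fun b hb => by rw [if_neg (Ne.symm hb), ite_self], if_pos rfl]

lemma sum_abs_pushZ_of_injective [Fintype β] {f : α → β} (hf : f.Injective) (z : α → ℤ) :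
    ∑ b, |pushZ f z b| = ∑ a, |z a| := by
  refine (Fintype.sum_of_injective f hf _ _ (fun b hb => ?_) fun a => ?_).symm
  · rw [abs_eq_zero, pushZ, sum_eq_zero]
    intro a ha
    exact absurd ⟨a, (mem_filter.1 ha).2⟩ hb
  · rw [pushZ_apply_eq_sum_ite, Fintype.sum_eq_single a fun b hb => if_neg (hf.ne hb), if_pos rfl]

end pushZ

section labels

variable {V : Type} [DecidableEq V]

def restrictLabel {S T : Finset V} (h : T ⊆ S) (a : {x // x ∈ S} → Bool) :
    {x // x ∈ T} → Bool :=
  fun x => a ⟨x.1, h x.2⟩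

def extendLabel {T : Finset V} (S : Finset V) (b : {x // x ∈ T} → Bool) :
    {x // x ∈ S} → Bool :=
  fun x => if hx : x.1 ∈ T then b ⟨x.1, hx⟩ else false

lemma restrictLabel_comp_extendLabel {S T : Finset V} (h : T ⊆ S) :
    restrictLabel h ∘ extendLabel S = id := by
  funext b x
  simp [restrictLabel, extendLabel]

lemma extendLabel_injective {S T : Finset V} (h : T ⊆ S) :
    (extendLabel (T := T) S).Injective :=
  Function.LeftInverse.injective (g := restrictLabel h)
    (congrFun (restrictLabel_comp_extendLabel h))

lemma restrictLabel_comp_extendLabel_comm {S T₁ T₂ : Finset V} (h : T₂ ⊆ S) :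
    restrictLabel h ∘ extendLabel S =
      extendLabel T₂ ∘ restrictLabel (T := T₁ ∩ T₂) inter_subset_left := by
  funext b x
  simp [restrictLabel, extendLabel, x.2]

variable [Fintype V]

lemma projZ_eq_pushZ {S T : Finset V} (h : T ⊆ S) (z : ZL S) :
    projZ h z = pushZ (restrictLabel h) z := by
  funext b
  simp only [projZ, pushZ_apply_eq_sum_ite, funext_iff, restrictLabel]

lemma projZ_sub {S T : Finset V} (h : T ⊆ S) (z z' : ZL S) :
    projZ h (z - z') = projZ h z - projZ h z' := by
  simp only [projZ_eq_pushZ, pushZ_sub]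

lemma projZ_projZ {S T U : Finset V} (h₁ : T ⊆ S) (h₂ : U ⊆ T) (z : ZL S) :
    projZ h₂ (projZ h₁ z) = projZ (h₂.trans h₁) z := by
  simp only [projZ_eq_pushZ, pushZ_pushZ]
  rfl

end labels

theorem glue_cutsame {V : Type} [Fintype V] [DecidableEq V] (X₁ X₂ : Finset V)
    (z : ZL (X₁ ∪ X₂)) (zbar : ZL X₁)
    (hmatch : projZ (T := X₁ ∩ X₂) (inter_subset_left.trans subset_union_left) z
      = projZ (T := X₁ ∩ X₂) inter_subset_left zbar) :
    ∃ z' : ZL (X₁ ∪ X₂),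
      projZ subset_union_left z' = zbar ∧
      projZ subset_union_right z' = projZ subset_union_right z ∧
      l1Z (z - z') = l1Z (projZ subset_union_left z - zbar) := by
  set w := projZ subset_union_left z - zbar
  have hw : projZ (T := X₁ ∩ X₂) inter_subset_left w = 0 := by
    rw [projZ_sub, projZ_projZ, hmatch, sub_self]
  set u := pushZ (extendLabel (X₁ ∪ X₂)) w
  refine ⟨z - u, ?_, ?_, ?_⟩
  · rw [projZ_sub, projZ_eq_pushZ subset_union_left u, pushZ_pushZ,
      restrictLabel_comp_extendLabel, pushZ_id, sub_sub_cancel]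
  · rw [projZ_sub, projZ_eq_pushZ subset_union_right u, pushZ_pushZ,
      restrictLabel_comp_extendLabel_comm, ← pushZ_pushZ, ← projZ_eq_pushZ, hw, pushZ_zero,
      sub_zero]
  · rw [sub_sub_cancel, l1Z, l1Z,
      sum_abs_pushZ_of_injective (extendLabel_injective subset_union_left)]
end

section
/- If G is a 2-connected graph with no K₄ minor and G is not a cycle, then there exists a series-parallel decomposition of G in which the final operation is a parallel join of at least three series-parallel graphs; equivalently, there exist two vertices u, v of G such that G has at least three {u,v}-bridges. -/
open Finset
open scoped Classical

/-- `ZV V` is the integral lattice with basis indexed by binary labelings of `V`. -/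
abbrev ZV (V : Type) : Type := (V → Bool) → ℤ

/-- The 2-way marginal `π_{ij}` of `z` at the pair `(i, j)`, as a function of the
labeling `(b₁, b₂)` of `{i, j}`. -/
noncomputable def mproj {V : Type} [Fintype V] (z : ZV V) (i j : V)
    (b₁ b₂ : Bool) : ℤ :=
  ∑ a : V → Bool, if a i = b₁ ∧ a j = b₂ then z a else 0

/-- `z` and `z'` have the same image under `π_G`, the product of the 2-way marginal
maps `π_{ij}` over all edges `ij` of `G`. -/
def margEq {V : Type} [Fintype V] (G : SimpleGraph V) (z z' : ZV V) : Prop :=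
  ∀ i j : V, G.Adj i j → ∀ b₁ b₂ : Bool, mproj z i j b₁ b₂ = mproj z' i j b₁ b₂

/-- The ℓ₁-norm on `ZV V`. -/
noncomputable def l1 {V : Type} [Fintype V] (z : ZV V) : ℤ := ∑ a, |z a|

/-- A vector is non-negative if all coordinates are non-negative. -/
def Nonneg {V : Type} (z : ZV V) : Prop := ∀ a, 0 ≤ z a

/-- `B` is a Markov basis for the binary graph model of `G`: a finite subset of
`Ker π_G` connecting any two non-negative vectors with equal marginals through
non-negative vectors. -/
def IsMarkovBasis {V : Type} [Fintype V] (G : SimpleGraph V) (B : Finset (ZV V)) :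
    Prop :=
  (∀ u ∈ B, margEq G u 0) ∧
  ∀ v₁ v₂ : ZV V, Nonneg v₁ → Nonneg v₂ → margEq G v₁ v₂ →
    ∃ (ℓ : ℕ) (u : Fin ℓ → ZV V),
      (∀ k, u k ∈ B ∨ -u k ∈ B) ∧
      v₁ + ∑ k, u k = v₂ ∧
      ∀ l : ℕ, l ≤ ℓ →
        Nonneg (v₁ + ∑ k ∈ Finset.univ.filter (fun k : Fin ℓ => (k : ℕ) < l), u k)

/-- The Markov width `μ(G)`: the least `k` such that `G` has a Markov basis all of
whose elements have ℓ₁-norm at most `2k`. -/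
noncomputable def MarkovWidth {V : Type} [Fintype V] (G : SimpleGraph V) : ℕ :=
  sInf {k : ℕ | ∃ B : Finset (ZV V), IsMarkovBasis G B ∧ ∀ u ∈ B, l1 u ≤ 2 * k}

/-- `G` has a `K₄` minor: there are four nonempty pairwise disjoint connected branch
sets with an edge of `G` between every two of them. -/
def HasK4Minor {V : Type} (G : SimpleGraph V) : Prop :=
  ∃ f : Fin 4 → Set V,
    (∀ i, (f i).Nonempty) ∧
    (Pairwise fun i j => Disjoint (f i) (f j)) ∧
    (∀ i, (SimpleGraph.induce (f i) G).Connected) ∧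
    (∀ i j, i ≠ j → ∃ a ∈ f i, ∃ b ∈ f j, G.Adj a b)

/-- A graph is 2-connected if it has at least three vertices, is connected, and
stays connected after deleting any single vertex. -/
def TwoConnected {W : Type} (G : SimpleGraph W) : Prop :=
  3 ≤ Nat.card W ∧ G.Connected ∧
    ∀ w : W, (((⊤ : G.Subgraph).deleteVerts {w}).coe).Connected

/-- Series-parallel graphs with two poles, as spanning structures inside the
complete graph on `V`: a single edge is series-parallel, and serial and parallel
joins (gluing along one, resp. both, poles) of series-parallel graphs are
series-parallel. -/
inductive IsSP {V : Type} : (⊤ : SimpleGraph V).Subgraph → V → V → Prop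
  | single {u v : V} (h : u ≠ v) :
      IsSP (SimpleGraph.subgraphOfAdj ⊤ ((SimpleGraph.top_adj u v).2 h)) u v
  | series {H₁ H₂ : (⊤ : SimpleGraph V).Subgraph} {u w v : V} :
      IsSP H₁ u w → IsSP H₂ w v → H₁.verts ∩ H₂.verts = {w} → IsSP (H₁ ⊔ H₂) u v
  | parallel {H₁ H₂ : (⊤ : SimpleGraph V).Subgraph} {u v : V} :
      IsSP H₁ u v → IsSP H₂ u v → H₁.verts ∩ H₂.verts = {u, v} → IsSP (H₁ ⊔ H₂) u v
/-- `G` is a cycle: a connected graph in which every vertex has degree two. -/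
def IsCycleGraph {W : Type} [Fintype W] (G : SimpleGraph W) : Prop :=
  G.Connected ∧ ∀ w : W, G.degree w = 2

/-- The number of `{u,v}`-bridges of `G`: one bridge for each connected component of
`G - {u, v}`, plus one for the edge `uv` if it is present. -/
noncomputable def numBridges {V : Type} (G : SimpleGraph V) (u v : V) : ℕ :=
  Nat.card (((⊤ : G.Subgraph).deleteVerts {u, v}).coe.ConnectedComponent) +
    (if G.Adj u v then 1 else 0)


/-!
Since `G` is 2-connected and not a cycle, some vertex `w` has three neighbours `a, b, c`. A path
`P` from `a` to `b` in `G - w`, together with a path from `c` to `P` in `G - w`, yields a vertex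
`m` joined to `w` by three internally disjoint paths, one of which may be the edge `wm`. If
`G - {w, m}` connected the interiors of two of these paths, the three paths and the connection
would contract to a `K₄`. So the nonempty interiors lie in distinct components of `G - {w, m}`,
and with the edge `wm` they give three `{w, m}`-bridges.
-/

theorem pairwise_fin_four {α : Type*} {r : α → α → Prop} (hr : ∀ x y, r x y → r y x)
    {a b c d : α} (hab : r a b) (hac : r a c) (had : r a d) (hbc : r b c) (hbd : r b d)
    (hcd : r c d) : Pairwise fun i j => r (![a, b, c, d] i) (![a, b, c, d] j) := by
  intro i j hij
  fin_cases i <;> fin_cases j <;> first | exact absurd rfl hij | assumption | exact hr _ _ ‹_›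

namespace SimpleGraph

variable {V : Type} {G : SimpleGraph V}

theorem connected_induce_singleton (v : V) : (G.induce {v}).Connected := by
  rw [induce_singleton_eq_top]
  exact connected_top

/-- The vertex set of the component of `G - T` containing `a`; it is empty when `a ∈ T`. -/
def reachableAvoiding (G : SimpleGraph V) (T : Set V) (a : V) : Set V :=
  {x | ∃ p : G.Walk a x, ∀ z ∈ p.support, z ∉ T}

section reachableAvoiding

variable {T : Set V} {a : V}

theorem mem_reachableAvoiding_self (ha : a ∉ T) : a ∈ G.reachableAvoiding T a :=
  ⟨.nil, by simpa⟩

theorem disjoint_reachableAvoiding : Disjoint (G.reachableAvoiding T a) T :=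
  Set.disjoint_left.2 fun _ ⟨p, hp⟩ => hp _ p.end_mem_support

theorem mem_reachableAvoiding_of_adj {x y : V} (hx : x ∈ G.reachableAvoiding T a)
    (hxy : G.Adj x y) (hy : y ∉ T) : y ∈ G.reachableAvoiding T a := by
  obtain ⟨p, hp⟩ := hx
  refine ⟨p.concat hxy, fun z hz => ?_⟩
  rw [Walk.support_concat, List.mem_append, List.mem_singleton] at hz
  rcases hz with hz | rfl
  exacts [hp z hz, hy]

theorem connected_induce_reachableAvoiding (ha : a ∉ T) :
    (G.induce (G.reachableAvoiding T a)).Connected := by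
  refine induce_connected_of_patches a (mem_reachableAvoiding_self ha) fun {x} ⟨p, hp⟩ => ?_
  refine ⟨{z | z ∈ p.support}, fun z hz => ?_, p.start_mem_support, p.end_mem_support,
    p.connected_induce_support.preconnected _ _⟩
  exact ⟨p.takeUntil z hz, fun y hy => hp y (p.support_takeUntil_subset_support hz hy)⟩

theorem subset_reachableAvoiding {A : Set V} (hA : (G.induce A).Connected) (ha : a ∈ A)
    (hAT : Disjoint A T) : A ⊆ G.reachableAvoiding T a := by
  intro x hx
  obtain ⟨q⟩ := hA.preconnected ⟨a, ha⟩ ⟨x, hx⟩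
  refine ⟨q.map (Embedding.induce A).toHom, fun z hz => ?_⟩
  obtain ⟨y, -, rfl⟩ := List.mem_map.1 (Walk.support_map _ q ▸ hz)
  exact Set.disjoint_left.1 hAT y.2

theorem exists_adj_of_walk_leaving {x y : V} (p : G.Walk x y)
    (hx : x ∈ G.reachableAvoiding T a) (hy : y ∉ G.reachableAvoiding T a) :
    ∃ z ∈ G.reachableAvoiding T a, ∃ z' ∈ p.support, z' ∈ T ∧ G.Adj z z' := by
  obtain ⟨d, hd, hfst, hsnd⟩ := p.exists_boundary_dart _ hx hy
  exact ⟨d.fst, hfst, d.snd, p.dart_snd_mem_support_of_mem_darts hd,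
    by_contra fun hT => hsnd (mem_reachableAvoiding_of_adj hfst d.adj hT), d.adj⟩

theorem mem_reachableAvoiding_of_reachable_deleteVerts
    {x y : ((⊤ : G.Subgraph).deleteVerts T).verts}
    (h : ((⊤ : G.Subgraph).deleteVerts T).coe.Reachable x y) :
    (y : V) ∈ G.reachableAvoiding T x := by
  obtain ⟨q⟩ := h
  refine ⟨q.map (Subgraph.hom _), fun z hz => ?_⟩
  obtain ⟨z, -, rfl⟩ := List.mem_map.1 (Walk.support_map _ q ▸ hz)
  exact z.2.2

end reachableAvoiding

theorem hasK4Minor_of_branchSets {A B C D : Set V} (hA : (G.induce A).Connected)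
    (hB : (G.induce B).Connected) (hC : (G.induce C).Connected) (hD : (G.induce D).Connected)
    (hAB : Disjoint A B) (hAC : Disjoint A C) (hAD : Disjoint A D) (hBC : Disjoint B C)
    (hBD : Disjoint B D) (hCD : Disjoint C D) (eAB : ∃ a ∈ A, ∃ b ∈ B, G.Adj a b)
    (eAC : ∃ a ∈ A, ∃ c ∈ C, G.Adj a c) (eAD : ∃ a ∈ A, ∃ d ∈ D, G.Adj a d)
    (eBC : ∃ b ∈ B, ∃ c ∈ C, G.Adj b c) (eBD : ∃ b ∈ B, ∃ d ∈ D, G.Adj b d)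
    (eCD : ∃ c ∈ C, ∃ d ∈ D, G.Adj c d) : HasK4Minor G := by
  have hconn : ∀ i, (G.induce (![A, B, C, D] i)).Connected := by
    intro i
    fin_cases i
    exacts [hA, hB, hC, hD]
  exact ⟨![A, B, C, D], fun i => (hconn i).nonempty.elim fun x => ⟨x, x.2⟩,
    pairwise_fin_four (fun _ _ h => h.symm) hAB hAC hAD hBC hBD hCD, hconn,
    fun i j hij => pairwise_fin_four (r := fun S T => ∃ s ∈ S, ∃ t ∈ T, G.Adj s t)
      (fun _ _ ⟨s, hs, t, ht, h⟩ => ⟨t, ht, s, hs, h.symm⟩) eAB eAC eAD eBC eBD eCD hij⟩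

/-- `I` plays the role of the set of inner vertices of a `u`–`v` path of length at least two. -/
structure IsArm (G : SimpleGraph V) (u v : V) (I : Set V) : Prop where
  left_notMem : u ∉ I
  right_notMem : v ∉ I
  connected : (G.induce I).Connected
  exists_adj_left : ∃ x ∈ I, G.Adj u x
  exists_adj_right : ∃ y ∈ I, G.Adj v y

section IsArm

variable {u v : V} {I J K : Set V}

theorem IsArm.connected_induce_insert_left (hI : G.IsArm u v I) :
    (G.induce (insert u I)).Connected := by
  obtain ⟨x, hx, hux⟩ := hI.exists_adj_left
  rw [Set.insert_eq]
  exact connected_induce_union (by simp) hI.connected.preconnected rfl hx hux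

theorem IsArm.exists_mem_deleteVerts (hI : G.IsArm u v I) :
    ∃ x : ((⊤ : G.Subgraph).deleteVerts {u, v}).verts, (x : V) ∈ I := by
  obtain ⟨⟨x, hx⟩⟩ := hI.connected.nonempty
  exact ⟨⟨x, trivial, by rintro (rfl | rfl); exacts [hI.left_notMem hx, hI.right_notMem hx]⟩, hx⟩

theorem hasK4Minor_of_adj_arms (huv : u ≠ v) (hI : G.IsArm u v I) (hJ : G.IsArm u v J)
    (hK : G.IsArm u v K ∨ K = ∅ ∧ G.Adj u v)
    (hIJ : Disjoint I J) (hIK : Disjoint I K) (hJK : Disjoint J K)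
    (hadj : ∃ x ∈ I, ∃ y ∈ J, G.Adj x y) : HasK4Minor G := by
  obtain ⟨hvK, hSconn, hSv⟩ : v ∉ K ∧ (G.induce (insert u K)).Connected ∧
      ∃ s ∈ insert u K, ∃ t ∈ ({v} : Set V), G.Adj s t := by
    rcases hK with hK | ⟨rfl, huv⟩
    · obtain ⟨y, hy, hvy⟩ := hK.exists_adj_right
      exact ⟨hK.right_notMem, hK.connected_induce_insert_left, y, Or.inr hy, v, rfl, hvy.symm⟩
    · rw [insert_empty_eq]
      exact ⟨id, connected_induce_singleton u, u, rfl, v, rfl, huv⟩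
  have adj_u : ∀ {I}, G.IsArm u v I → ∃ s ∈ insert u K, ∃ x ∈ I, G.Adj s x := fun hI =>
    let ⟨x, hx, hux⟩ := hI.exists_adj_left; ⟨u, Or.inl rfl, x, hx, hux⟩
  have adj_v : ∀ {I}, G.IsArm u v I → ∃ s ∈ ({v} : Set V), ∃ x ∈ I, G.Adj s x := fun hI =>
    let ⟨x, hx, hvx⟩ := hI.exists_adj_right; ⟨v, rfl, x, hx, hvx⟩
  have disj_u : ∀ {I}, G.IsArm u v I → Disjoint I K → Disjoint (insert u K) I :=
    fun hI hIK => Set.disjoint_insert_left.2 ⟨hI.left_notMem, hIK.symm⟩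
  exact hasK4Minor_of_branchSets hSconn (connected_induce_singleton v) hI.connected hJ.connected
    (Set.disjoint_singleton_right.2 fun h => h.elim (huv ·.symm) hvK) (disj_u hI hIK)
    (disj_u hJ hJK) (Set.disjoint_singleton_left.2 hI.right_notMem)
    (Set.disjoint_singleton_left.2 hJ.right_notMem) hIJ hSv (adj_u hI) (adj_u hJ) (adj_v hI)
    (adj_v hJ) hadj

theorem hasK4Minor_of_mem_reachableAvoiding (huv : u ≠ v) (hI : G.IsArm u v I)
    (hJ : G.IsArm u v J) (hK : G.IsArm u v K ∨ K = ∅ ∧ G.Adj u v)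
    (hIJ : Disjoint I J) (hIK : Disjoint I K) (hJK : Disjoint J K) {x y : V} (hx : x ∈ I)
    (hy : y ∈ J) (hxy : y ∈ G.reachableAvoiding {u, v} x) : HasK4Minor G := by
  -- Grow `I` to its component `X` in `G - ({u, v} ∪ J ∪ K)`; the walk from `x` to `y` leaves `X`
  -- through an edge into `J` or into `K`.
  set T : Set V := insert u (insert v (J ∪ K))
  set X := G.reachableAvoiding T x
  have hIT : Disjoint I T := Set.disjoint_insert_right.2 ⟨hI.left_notMem,
    Set.disjoint_insert_right.2 ⟨hI.right_notMem, Set.disjoint_union_right.2 ⟨hIJ, hIK⟩⟩⟩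
  have hIX : I ⊆ X := subset_reachableAvoiding hI.connected hx hIT
  have hXT : Disjoint X T := disjoint_reachableAvoiding
  have hX : G.IsArm u v X :=
    { left_notMem := fun h => hXT.ne_of_mem h (Set.mem_insert u _) rfl
      right_notMem := fun h => hXT.ne_of_mem h (by simp [T]) rfl
      connected := connected_induce_reachableAvoiding (Set.disjoint_left.1 hIT hx)
      exists_adj_left := let ⟨z, hz, h⟩ := hI.exists_adj_left; ⟨z, hIX hz, h⟩
      exists_adj_right := let ⟨z, hz, h⟩ := hI.exists_adj_right; ⟨z, hIX hz, h⟩ }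
  have hXJ : Disjoint X J := hXT.mono_right (by intro z; simp +contextual [T])
  have hXK : Disjoint X K := hXT.mono_right (by intro z; simp +contextual [T])
  obtain ⟨p, hp⟩ := hxy
  obtain ⟨z, hz, z', hz'p, hz'T, hzz'⟩ :=
    exists_adj_of_walk_leaving p (hIX hx) fun hyX => hXJ.ne_of_mem hyX hy rfl
  have hz'JK : z' ∈ J ∪ K := by
    have hz'uv := hp z' hz'p
    simp only [T, Set.mem_insert_iff, Set.mem_singleton_iff, not_or] at hz'T hz'uv
    exact (hz'T.resolve_left hz'uv.1).resolve_left hz'uv.2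
  rcases hz'JK with hz'J | hz'K
  · exact hasK4Minor_of_adj_arms huv hX hJ hK hXJ hXK hJK ⟨z, hz, z', hz'J, hzz'⟩
  · have hK' : G.IsArm u v K := hK.resolve_right fun ⟨hK, _⟩ => by simp [hK] at hz'K
    exact hasK4Minor_of_adj_arms huv hX hK' (.inl hJ) hXK hXJ hJK.symm ⟨z, hz, z', hz'K, hzz'⟩

end IsArm

/-- Three internally disjoint `u`–`v` paths, given by their sets of inner vertices; the third
path may be the edge `uv`. -/
def HasTheta (G : SimpleGraph V) (u v : V) : Prop :=
  ∃ I₁ I₂ I₃ : Set V, G.IsArm u v I₁ ∧ G.IsArm u v I₂ ∧ (G.IsArm u v I₃ ∨ I₃ = ∅ ∧ G.Adj u v) ∧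
    Disjoint I₁ I₂ ∧ Disjoint I₁ I₃ ∧ Disjoint I₂ I₃

theorem HasTheta.three_le_numBridges [Finite V] {u v : V} (hK4 : ¬HasK4Minor G) (huv : u ≠ v)
    (h : G.HasTheta u v) : 3 ≤ numBridges G u v := by
  obtain ⟨I₁, I₂, I₃, h₁, h₂, h₃, h₁₂, h₁₃, h₂₃⟩ := h
  unfold numBridges
  set H := ((⊤ : G.Subgraph).deleteVerts {u, v}).coe
  have sep : ∀ {I J K}, G.IsArm u v I → G.IsArm u v J → (G.IsArm u v K ∨ K = ∅ ∧ G.Adj u v) →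
      Disjoint I J → Disjoint I K → Disjoint J K →
      ∀ {x y : ((⊤ : G.Subgraph).deleteVerts {u, v}).verts}, (x : V) ∈ I → (y : V) ∈ J →
      H.connectedComponentMk x ≠ H.connectedComponentMk y :=
    fun hI hJ hK hIJ hIK hJK _ _ hx hy heq => hK4 <|
      hasK4Minor_of_mem_reachableAvoiding huv hI hJ hK hIJ hIK hJK hx hy <|
        mem_reachableAvoiding_of_reachable_deleteVerts (ConnectedComponent.exact heq)
  obtain ⟨x₁, hx₁⟩ := h₁.exists_mem_deleteVerts
  obtain ⟨x₂, hx₂⟩ := h₂.exists_mem_deleteVerts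
  have := Fintype.ofFinite H.ConnectedComponent
  rw [Nat.card_eq_fintype_card]
  rcases h₃ with h₃ | ⟨rfl, hadj⟩
  · obtain ⟨x₃, hx₃⟩ := h₃.exists_mem_deleteVerts
    have := Fintype.two_lt_card_iff.2 ⟨_, _, _, sep h₁ h₂ (.inl h₃) h₁₂ h₁₃ h₂₃ hx₁ hx₂,
      sep h₁ h₃ (.inl h₂) h₁₃ h₁₂ h₂₃.symm hx₁ hx₃,
      sep h₂ h₃ (.inl h₁) h₂₃ h₁₂.symm h₁₃.symm hx₂ hx₃⟩
    omega
  · have := Fintype.one_lt_card_iff.2 ⟨_, _, sep h₁ h₂ (.inr ⟨rfl, hadj⟩) h₁₂ h₁₃ h₂₃ hx₁ hx₂⟩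
    rw [if_pos hadj]
    omega

theorem isArm_of_isPath {w s m : V} {p : G.Walk s m} (hp : p.IsPath) (hsm : s ≠ m)
    (hws : G.Adj w s) (hwp : w ∉ p.support) : G.IsArm w m {z | z ∈ p.support ∧ z ≠ m} := by
  have hnil : ¬p.Nil := fun h => hsm h.eq
  have hsupp := p.support_dropLast_concat hnil
  have hm : m ∉ p.dropLast.support := by
    have := hp.support_nodup
    rw [← hsupp, List.nodup_append] at this
    exact fun h => this.2.2 m h m (List.mem_singleton_self m) rfl
  have hI : {z | z ∈ p.support ∧ z ≠ m} = {z | z ∈ p.dropLast.support} := by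
    ext z
    rw [← hsupp]
    simp only [Set.mem_ofPred_eq, List.mem_append, List.mem_singleton]
    constructor
    · rintro ⟨h | rfl, hz⟩
      exacts [h, (hz rfl).elim]
    · exact fun h => ⟨Or.inl h, fun hzm => hm (hzm ▸ h)⟩
  rw [hI]
  exact ⟨fun h => hwp (hsupp ▸ List.mem_append_left _ h), hm, p.dropLast.connected_induce_support,
    ⟨s, p.dropLast.start_mem_support, hws⟩,
    ⟨_, p.dropLast.end_mem_support, (p.adj_penultimate hnil).symm⟩⟩

theorem disjoint_takeUntil_dropUntil [DecidableEq V] {a b m : V} {p : G.Walk a b} (hp : p.IsPath)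
    (hm : m ∈ p.support) :
    Disjoint {z | z ∈ (p.takeUntil m hm).support ∧ z ≠ m}
      {z | z ∈ (p.dropUntil m hm).reverse.support ∧ z ≠ m} := by
  have := hp.support_nodup
  rw [← p.take_spec hm, Walk.support_append, ← (p.dropUntil m hm).cons_tail_support] at this
  refine Set.disjoint_left.2 fun z ⟨hz₁, _⟩ ⟨hz₂, hzm⟩ => List.disjoint_of_nodup_append this hz₁ ?_
  rw [Walk.support_reverse, List.mem_reverse, ← (p.dropUntil m hm).cons_tail_support] at hz₂
  exact (List.mem_cons.1 hz₂).resolve_left hzm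

/-- `I` is the interior of a third `w`–`m` path, starting with the edge `wc` and meeting `P` only
at `m`. -/
theorem hasTheta_of_isPath {w a b c m : V} {P : G.Walk a b} (hP : P.IsPath)
    (hwP : w ∉ P.support) (hwa : G.Adj w a) (hwb : G.Adj w b) (hwc : G.Adj w c) (hab : a ≠ b)
    (hac : a ≠ c) (hbc : b ≠ c) (hm : m ∈ P.support) {I : Set V}
    (hI : G.IsArm w m I ∨ I = ∅ ∧ c = m) (hIP : Disjoint I {z | z ∈ P.support}) :
    G.HasTheta w m := by
  set A := {z | z ∈ (P.takeUntil m hm).support ∧ z ≠ m}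
  set B := {z | z ∈ (P.dropUntil m hm).reverse.support ∧ z ≠ m}
  have hA : a ≠ m → G.IsArm w m A := fun ham => isArm_of_isPath (hP.takeUntil hm) ham hwa
    fun h => hwP (P.support_takeUntil_subset_support hm h)
  have hB : b ≠ m → G.IsArm w m B := fun hbm => isArm_of_isPath (hP.dropUntil hm).reverse hbm hwb
    fun h => hwP (P.support_dropUntil_subset_support hm (by simpa using h))
  have hAI : Disjoint A I :=
    hIP.symm.mono_left fun z hz => P.support_takeUntil_subset_support hm hz.1
  have hBI : Disjoint B I :=
    hIP.symm.mono_left fun z hz => P.support_dropUntil_subset_support hm (by simpa using hz.1)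
  by_cases ham : a = m
  · subst ham
    exact ⟨B, I, ∅, hB hab.symm, hI.resolve_right fun h => hac h.2.symm, .inr ⟨rfl, hwa⟩, hBI,
      Set.disjoint_empty _, Set.disjoint_empty _⟩
  by_cases hbm : b = m
  · subst hbm
    exact ⟨A, I, ∅, hA hab, hI.resolve_right fun h => hbc h.2.symm, .inr ⟨rfl, hwb⟩, hAI,
      Set.disjoint_empty _, Set.disjoint_empty _⟩
  exact ⟨A, B, I, hA ham, hB hbm, hI.imp_right fun ⟨hI, hcm⟩ => ⟨hI, hcm ▸ hwc⟩,
    disjoint_takeUntil_dropUntil hP hm, hAI, hBI⟩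

theorem exists_hasTheta {w a b c : V}
    (hconn : ∀ {x y}, x ≠ w → y ≠ w → y ∈ G.reachableAvoiding {w} x)
    (hwa : G.Adj w a) (hwb : G.Adj w b) (hwc : G.Adj w c) (hab : a ≠ b) (hac : a ≠ c)
    (hbc : b ≠ c) : ∃ m, w ≠ m ∧ G.HasTheta w m := by
  obtain ⟨P, hP⟩ := hconn hwa.ne' hwb.ne'
  have hwP : w ∉ P.bypass.support := fun h => hP w (P.support_bypass_subset_support h) rfl
  by_cases hcP : c ∈ P.bypass.support
  · exact ⟨c, hwc.ne, hasTheta_of_isPath P.bypass_isPath hwP hwa hwb hwc hab hac hbc hcP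
      (.inr ⟨rfl, rfl⟩) (Set.empty_disjoint _)⟩
  set T := insert w {z | z ∈ P.bypass.support}
  set R := G.reachableAvoiding T c
  have hcT : c ∉ T := by simp [T, hwc.ne', hcP]
  have hRT : Disjoint R T := disjoint_reachableAvoiding
  obtain ⟨Q, hQ⟩ := hconn hwc.ne' hwa.ne'
  obtain ⟨z, hz, m, hmQ, hmT, hzm⟩ := exists_adj_of_walk_leaving Q (mem_reachableAvoiding_self hcT)
    fun haR => hRT.ne_of_mem haR (Or.inr P.bypass.start_mem_support) rfl
  have hmP : m ∈ P.bypass.support := hmT.resolve_left (hQ m hmQ)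
  have hR : G.IsArm w m R :=
    ⟨fun h => hRT.ne_of_mem h (Set.mem_insert w _) rfl, fun h => hRT.ne_of_mem h (Or.inr hmP) rfl,
      connected_induce_reachableAvoiding hcT, ⟨c, mem_reachableAvoiding_self hcT, hwc⟩,
      ⟨z, hz, hzm.symm⟩⟩
  exact ⟨m, fun h => hwP (h ▸ hmP), hasTheta_of_isPath P.bypass_isPath hwP hwa hwb hwc hab hac hbc
    hmP (.inl hR) (hRT.mono_right (Set.subset_insert _ _))⟩

end SimpleGraph

open SimpleGraph

theorem TwoConnected.mem_reachableAvoiding {V : Type} {G : SimpleGraph V} (h2 : TwoConnected G)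
    {w x y : V} (hx : x ≠ w) (hy : y ≠ w) : y ∈ G.reachableAvoiding {w} x :=
  mem_reachableAvoiding_of_reachable_deleteVerts
    ((h2.2.2 w).preconnected ⟨x, trivial, hx⟩ ⟨y, trivial, hy⟩)

theorem TwoConnected.exists_ne_ne {V : Type} [Fintype V] {G : SimpleGraph V}
    (h2 : TwoConnected G) (w x : V) : ∃ y, y ≠ w ∧ y ≠ x := by
  have hcard : #{w, x} < #(univ : Finset V) := by
    have := h2.1
    rw [Nat.card_eq_fintype_card, ← card_univ] at this
    exact card_le_two.trans_lt this
  obtain ⟨y, -, hy⟩ := exists_mem_notMem_of_card_lt_card hcard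
  simp only [mem_insert, mem_singleton, not_or] at hy
  exact ⟨y, hy⟩

theorem TwoConnected.exists_adj_ne {V : Type} [Fintype V] {G : SimpleGraph V}
    (h2 : TwoConnected G) {w x : V} (hwx : w ≠ x) : ∃ y, G.Adj w y ∧ y ≠ x := by
  obtain ⟨y, hyw, hyx⟩ := h2.exists_ne_ne w x
  obtain ⟨p, hp⟩ := h2.mem_reachableAvoiding hwx hyx
  obtain ⟨d, hd, hfst, -⟩ := p.exists_boundary_dart {w} rfl hyw
  exact ⟨d.snd, hfst ▸ d.adj, hp _ (p.dart_snd_mem_support_of_mem_darts hd)⟩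

theorem TwoConnected.two_le_degree {V : Type} [Fintype V] {G : SimpleGraph V}
    (h2 : TwoConnected G) (w : V) : 2 ≤ G.degree w := by
  obtain ⟨x, hxw, -⟩ := h2.exists_ne_ne w w
  obtain ⟨y₁, h₁, -⟩ := h2.exists_adj_ne hxw.symm
  obtain ⟨y₂, h₂, hne⟩ := h2.exists_adj_ne h₁.ne
  rw [← card_neighborFinset_eq_degree]
  exact one_lt_card.2 ⟨y₂, by simpa, y₁, by simpa, hne⟩

theorem TwoConnected.exists_three_le_degree {V : Type} [Fintype V] {G : SimpleGraph V}
    (h2 : TwoConnected G) (hcyc : ¬IsCycleGraph G) : ∃ w, 3 ≤ G.degree w := by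
  by_contra! h
  exact hcyc ⟨h2.2.1, fun w => le_antisymm (Nat.le_of_lt_succ (h w)) (h2.two_le_degree w)⟩

theorem exists_three_bridges_general {V : Type} [Fintype V]
    (G : SimpleGraph V) (h2 : TwoConnected G) (hK4 : ¬ HasK4Minor G)
    (hcyc : ¬ IsCycleGraph G) :
    ∃ u v : V, u ≠ v ∧ 3 ≤ numBridges G u v := by
  obtain ⟨w, hw⟩ := h2.exists_three_le_degree hcyc
  obtain ⟨a, ha, b, hb, c, hc, hab, hac, hbc⟩ :=
    Finset.two_lt_card.1 ((G.card_neighborFinset_eq_degree w).symm ▸ hw)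
  rw [mem_neighborFinset] at ha hb hc
  obtain ⟨m, hwm, hθ⟩ := exists_hasTheta h2.mem_reachableAvoiding ha hb hc hab hac hbc
  exact ⟨w, m, hwm, hθ.three_le_numBridges hK4 hwm⟩

/-- If `G` is 2-connected, has no `K₄` minor and is not a cycle, then there are two
vertices `u` and `v` such that `G` has at least three `{u,v}`-bridges (equivalently,
`G` has a series-parallel decomposition whose final operation is a parallel join of
at least three series-parallel graphs). -/
theorem exists_three_bridges {V : Type} [Fintype V] [DecidableEq V]
    (G : SimpleGraph V) (h2 : TwoConnected G) (hK4 : ¬ HasK4Minor G)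
    (hcyc : ¬ IsCycleGraph G) :
    ∃ u v : V, u ≠ v ∧ 3 ≤ numBridges G u v :=
  exists_three_bridges_general G h2 hK4 hcyc
end

section
/- Let T be a clean triangulation of a surface (every 3-clique of the graph of T bounds a face) that is 2-face-colorable. Then the graph of T contains no subgraph isomorphic to K₄. -/
open Finset
open scoped Classical

/-- A (combinatorial) triangulation of a closed surface: a simple graph together
with a set of triangular faces such that every face is a 3-clique, every edge lies
in exactly two faces, every vertex lies in a face, and the link of every vertex is
connected (hence a cycle). -/
structure Triangulation (V : Type) [Fintype V] [DecidableEq V] where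
  graph : SimpleGraph V
  faces : Finset (Finset V)
  card_face : ∀ F ∈ faces, F.card = 3
  face_clique : ∀ F ∈ faces, ∀ x ∈ F, ∀ y ∈ F, x ≠ y → graph.Adj x y
  edge_faces : ∀ x y, graph.Adj x y → (faces.filter fun F => x ∈ F ∧ y ∈ F).card = 2
  vertex_face : ∀ v : V, ∃ F ∈ faces, v ∈ F
  link_connected : ∀ v : V,
    (SimpleGraph.fromRel fun (a b : graph.neighborSet v) =>
      ({v, a.1, b.1} : Finset V) ∈ faces).Connected

/-- A triangulation is clean if every triangle (3-clique) of its graph bounds a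
face. -/
def Triangulation.Clean {V : Type} [Fintype V] [DecidableEq V]
    (T : Triangulation V) : Prop :=
  ∀ x y z : V, T.graph.Adj x y → T.graph.Adj x z → T.graph.Adj y z →
    ({x, y, z} : Finset V) ∈ T.faces

/-- `c` is a proper 2-coloring of the faces of `T`: faces sharing an edge receive
distinct colors. -/
def Triangulation.IsFaceColoring {V : Type} [Fintype V] [DecidableEq V]
    (T : Triangulation V) (c : Finset V → Bool) : Prop :=
  ∀ F ∈ T.faces, ∀ F' ∈ T.faces, F ≠ F' → 2 ≤ (F ∩ F').card → c F ≠ c F'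

/-- A triangulation is 2-face-colorable if its faces admit a proper 2-coloring. -/
def Triangulation.TwoFaceColorable {V : Type} [Fintype V] [DecidableEq V]
    (T : Triangulation V) : Prop :=
  ∃ c : Finset V → Bool, T.IsFaceColoring c
/-- The graph of a clean 2-face-colorable triangulation contains no `K₄`
subgraph. -/
theorem no_K4_subgraph {V : Type} [Fintype V] [DecidableEq V]
    (T : Triangulation V) (hclean : T.Clean) (h2fc : T.TwoFaceColorable) :
    ¬ ∃ s : Finset V, s.card = 4 ∧ ∀ x ∈ s, ∀ y ∈ s, x ≠ y → T.graph.Adj x y := by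
  rintro ⟨s, hs, hadj⟩
  obtain ⟨x, t, hxt, rfl, ht⟩ := Finset.card_eq_succ.mp hs
  obtain ⟨y, z, w, hyz, hyw, hzw, rfl⟩ := Finset.card_eq_three.mp ht
  simp only [Finset.mem_insert, Finset.mem_singleton] at hxt
  push_neg at hxt
  obtain ⟨hxy, hxz, hxw⟩ := hxt
  have mx : x ∈ insert x ({y, z, w} : Finset V) := by simp
  have my : y ∈ insert x ({y, z, w} : Finset V) := by simp
  have mz : z ∈ insert x ({y, z, w} : Finset V) := by simp
  have mw : w ∈ insert x ({y, z, w} : Finset V) := by simp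
  have axy := hadj x mx y my hxy
  have axz := hadj x mx z mz hxz
  have axw := hadj x mx w mw hxw
  have ayz := hadj y my z mz hyz
  have ayw := hadj y my w mw hyw
  have azw := hadj z mz w mw hzw
  have hF1 : ({x, y, z} : Finset V) ∈ T.faces := hclean x y z axy axz ayz
  have hF2 : ({x, y, w} : Finset V) ∈ T.faces := hclean x y w axy axw ayw
  have hF3 : ({x, z, w} : Finset V) ∈ T.faces := hclean x z w axz axw azw
  obtain ⟨c, hc⟩ := h2fc
  have key : ∀ (a b : V) (F F' : Finset V), F ∈ T.faces → F' ∈ T.faces →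
      a ≠ b → a ∈ F → b ∈ F → a ∈ F' → b ∈ F' → F ≠ F' → c F ≠ c F' := by
    intro a b F F' hF hF' hab haF hbF haF' hbF' hne
    apply hc F hF F' hF' hne
    calc 2 = ({a, b} : Finset V).card := (Finset.card_pair hab).symm
      _ ≤ (F ∩ F').card := by
          apply Finset.card_le_card
          intro u hu
          simp only [Finset.mem_insert, Finset.mem_singleton] at hu
          rcases hu with rfl | rfl <;> simp [Finset.mem_inter, *]
  have ne12 : ({x, y, z} : Finset V) ≠ {x, y, w} := by
    intro h
    have : z ∈ ({x, y, w} : Finset V) := h ▸ (by simp)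
    simp only [Finset.mem_insert, Finset.mem_singleton] at this
    rcases this with rfl | rfl | rfl
    · exact hxz rfl
    · exact hyz rfl
    · exact hzw rfl
  have ne13 : ({x, y, z} : Finset V) ≠ {x, z, w} := by
    intro h
    have : y ∈ ({x, z, w} : Finset V) := h ▸ (by simp)
    simp only [Finset.mem_insert, Finset.mem_singleton] at this
    rcases this with rfl | rfl | rfl
    · exact hxy rfl
    · exact hyz rfl
    · exact hyw rfl
  have ne23 : ({x, y, w} : Finset V) ≠ {x, z, w} := by
    intro h
    have : y ∈ ({x, z, w} : Finset V) := h ▸ (by simp)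
    simp only [Finset.mem_insert, Finset.mem_singleton] at this
    rcases this with rfl | rfl | rfl
    · exact hxy rfl
    · exact hyz rfl
    · exact hyw rfl
  have d12 := key x y _ _ hF1 hF2 hxy (by simp) (by simp) (by simp) (by simp) ne12
  have d13 := key x z _ _ hF1 hF3 hxz (by simp) (by simp) (by simp) (by simp) ne13
  have d23 := key x w _ _ hF2 hF3 hxw (by simp) (by simp) (by simp) (by simp) ne23
  cases hb1 : c {x, y, z} <;> cases hb2 : c {x, y, w} <;> cases hb3 : c {x, z, w} <;>
    simp_all
end
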